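/- arXiv:1902.09989 — 2 statements merged into one kernel-verified Lean document; each statement's English description precedes it below -/
import Mathlib

section
/- Let 𝒜 ⊆ Mₙ(ℂ) be an operator algebra. The following are equivalent: (i) 𝒜 is antisymmetric; (ii) every self-adjoint element of 𝒜 is a complex scalar multiple of the identity matrix I; (iii) the only matrices P ∈ 𝒜 with P = P² = P* are P = 0 and possibly P = I; (iv) every unitary element of 𝒜 + ℂ·I is a complex scalar multiple of I; (v) every normal element of 𝒜 (every A ∈ 𝒜 with AA* = A*A) is a complex scalar multiple of I. -/
open Matrix

noncomputable section

abbrev Mat (n : ℕ) := Matrix (Fin n) (Fin n) ℂ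

/-- An operator algebra: a complex linear subspace of matrices closed under multiplication. -/
def IsOpAlg {n : ℕ} (S : Set (Mat n)) : Prop :=
  0 ∈ S ∧ (∀ A ∈ S, ∀ B ∈ S, A + B ∈ S) ∧ (∀ (c : ℂ), ∀ A ∈ S, c • A ∈ S) ∧
    (∀ A ∈ S, ∀ B ∈ S, A * B ∈ S)

/-- Antisymmetry: `𝒜 ∩ 𝒜* ⊆ ℂ·I`. -/
def Antisym {n : ℕ} (S : Set (Mat n)) : Prop :=
  ∀ A ∈ S, Aᴴ ∈ S → ∃ c : ℂ, A = c • (1 : Mat n)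

/-!
The only substantial implication is (iii) ⇒ (v). A normal matrix `a` that is not scalar has two
distinct eigenvalues, one of them `λ ≠ 0`. Its spectral projection onto `λ` is a self-adjoint
idempotent, and since the spectrum is finite it equals `p(a)` for an interpolating polynomial `p`
with `p(0) = 0`; so it lies in `𝒜`, yet it is neither `0` nor `I`. The remaining implications are
algebra: an element of `𝒜 ∩ 𝒜*` is a combination of the self-adjoint elements `a + a*` and
`i(a - a*)` of `𝒜`, a projection `e` gives the unitary `I - 2e`, and if `a + c·I` is unitary
then `a` is normal.
-/

open Polynomial

theorem Polynomial.exists_eval_eqOn_of_finite {K : Type*} [Field K] {s : Set K} (hs : s.Finite)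
    (f : K → K) : ∃ p : K[X], s.EqOn (fun x ↦ p.eval x) f := by
  classical
  exact ⟨Lagrange.interpolate hs.toFinset id f, fun _ hx ↦
    Lagrange.eval_interpolate_at_node f Function.injective_id.injOn (hs.mem_toFinset.mpr hx)⟩

theorem NonUnitalSubalgebra.aeval_mem_of_coeff_zero_eq_zero {R A : Type*} [CommSemiring R]
    [Semiring A] [Algebra R A] (S : NonUnitalSubalgebra R A) {a : A} (ha : a ∈ S) {p : R[X]}
    (hp : p.coeff 0 = 0) : aeval a p ∈ S := by
  have hpow : ∀ k : ℕ, a ^ (k + 1) ∈ S := fun k ↦ by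
    induction k with
    | zero => simpa using ha
    | succ k ih => rw [pow_succ]; exact S.mul_mem ih ha
  rw [aeval_eq_sum_range]
  refine sum_mem fun i _ ↦ ?_
  cases i with
  | zero => simp [hp]
  | succ k => exact SMulMemClass.smul_mem _ (hpow k)

theorem eq_zero_or_eq_one_of_isIdempotentElem_algebraMap {K A : Type*} [Field K] [Ring A]
    [Algebra K A] {c : K} (hc : IsIdempotentElem (algebraMap K A c)) :
    algebraMap K A c = 0 ∨ algebraMap K A c = 1 := by
  rcases subsingleton_or_nontrivial A with hA | hA
  · exact .inl (Subsingleton.elim _ _)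
  · have : IsIdempotentElem c := (algebraMap K A).injective (by simpa using hc.eq)
    rcases IsIdempotentElem.iff_eq_zero_or_one.mp this with rfl | rfl <;> simp

section CStarAlgebra

variable {A : Type*} [CStarAlgebra A]

theorem NonUnitalSubalgebra.cfc_mem_of_finite_spectrum (S : NonUnitalSubalgebra ℂ A) {a : A}
    [IsStarNormal a] (ha : a ∈ S) (hfin : (spectrum ℂ a).Finite) {f : ℂ → ℂ} (hf : f 0 = 0) :
    cfc f a ∈ S := by
  obtain ⟨p, hp⟩ := exists_eval_eqOn_of_finite (hfin.insert 0) f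
  have hp0 : p.coeff 0 = 0 := by
    rw [coeff_zero_eq_eval_zero]
    exact (hp (Set.mem_insert _ _)).trans hf
  rw [← cfc_congr (hp.mono (Set.subset_insert _ _)), cfc_polynomial p a]
  exact S.aeval_mem_of_coeff_zero_eq_zero ha hp0

theorem isStarProjection_cfc {a : A} {f : ℂ → ℂ} (hf : ∀ z, f z = 0 ∨ f z = 1)
    (hcont : ContinuousOn f (spectrum ℂ a)) : IsStarProjection (cfc f a) := by
  have hidem : ∀ z, f z * f z = f z := fun z ↦ by rcases hf z with h | h <;> simp [h]
  have hstar : ∀ z, star (f z) = f z := fun z ↦ by rcases hf z with h | h <;> simp [h]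
  refine ⟨?_, ?_⟩
  · rw [IsIdempotentElem, ← cfc_mul f f a]
    simp only [hidem]
  · rw [IsSelfAdjoint, ← cfc_star]
    simp only [hstar]

theorem NonUnitalSubalgebra.exists_eq_algebraMap_of_isStarNormal (S : NonUnitalSubalgebra ℂ A)
    (hS : ∀ e ∈ S, IsStarProjection e → e = 0 ∨ e = 1) {a : A} [IsStarNormal a] (ha : a ∈ S)
    (hfin : (spectrum ℂ a).Finite) : ∃ c : ℂ, a = algebraMap ℂ A c := by
  rcases (spectrum ℂ a).subsingleton_or_nontrivial with hsub | hnt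
  · obtain ⟨c, hc⟩ : ∃ c, spectrum ℂ a ⊆ {c} := by
      rcases hsub.eq_empty_or_singleton with h | ⟨c, h⟩
      · exact ⟨0, h ▸ Set.empty_subset _⟩
      · exact ⟨c, h.le⟩
    exact ⟨c, CFC.eq_algebraMap_of_spectrum_subset_singleton a c hc⟩
  exfalso
  -- `S` need not contain `1`, so the spectral projection must come from a function vanishing at 0.
  obtain ⟨l, hl, hl0⟩ := hnt.exists_ne 0
  obtain ⟨m, hm, hml⟩ := hnt.exists_ne l
  classical
  set f : ℂ → ℂ := fun z ↦ if z = l then 1 else 0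
  have hcont : ContinuousOn f (spectrum ℂ a) := hfin.continuousOn f
  have he : cfc f a ∈ S := S.cfc_mem_of_finite_spectrum ha hfin (if_neg hl0.symm)
  rcases hS _ he (isStarProjection_cfc (fun z ↦ by by_cases h : z = l <;> simp [f, h]) hcont)
    with h0 | h1
  · rw [← cfc_zero ℂ a, cfc_eq_cfc_iff_eqOn] at h0
    simpa [f] using h0 hl
  · rw [← cfc_one ℂ a, cfc_eq_cfc_iff_eqOn] at h1
    simpa [f, hml] using h1 hm

end CStarAlgebra

section StarAlgebra

variable {A : Type*} [Ring A] [StarRing A]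

theorem IsStarProjection.one_sub_two_mul_mem_unitary {e : A} (he : IsStarProjection e) :
    1 - 2 * e ∈ unitary A := by
  have hstar : star (1 - 2 * e) = 1 - 2 * e := by simp [he.isSelfAdjoint.star_eq, two_mul]
  have hsq : (1 - 2 * e) * (1 - 2 * e) = 1 := by
    have := he.isIdempotentElem.eq
    calc (1 - 2 * e) * (1 - 2 * e) = 1 + 4 * (e * e - e) := by noncomm_ring
      _ = 1 := by rw [this, sub_self, mul_zero, add_zero]
  rw [Unitary.mem_iff, hstar]
  exact ⟨hsq, hsq⟩

variable [Algebra ℂ A] [StarModule ℂ A]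

theorem NonUnitalSubalgebra.exists_eq_algebraMap_of_star_mem (S : NonUnitalSubalgebra ℂ A)
    (hS : ∀ a ∈ S, IsSelfAdjoint a → ∃ c : ℂ, a = algebraMap ℂ A c) {a : A} (ha : a ∈ S)
    (ha' : star a ∈ S) : ∃ c : ℂ, a = algebraMap ℂ A c := by
  obtain ⟨c, hc⟩ := hS (a + star a) (S.add_mem ha ha') (.add_star_self a)
  obtain ⟨d, hd⟩ := hS (Complex.I • (a - star a)) (SMulMemClass.smul_mem _ (S.sub_mem ha ha'))
    (by simp [IsSelfAdjoint, star_smul, smul_sub]; abel)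
  refine ⟨(c - Complex.I * d) / 2, ?_⟩
  calc a = (2⁻¹ : ℂ) • ((a + star a) - Complex.I • (Complex.I • (a - star a))) := by
        rw [smul_smul, Complex.I_mul_I]; module
    _ = _ := by rw [hc, hd]; simp only [Algebra.algebraMap_eq_smul_one]; module

theorem isStarNormal_of_add_algebraMap_mem_unitary {a : A} {c : ℂ}
    (h : a + algebraMap ℂ A c ∈ unitary A) : IsStarNormal a := by
  have : IsStarNormal (a + algebraMap ℂ A c) := isStarNormal_of_mem_unitary h
  have : IsStarNormal (algebraMap ℂ A c) := ⟨Algebra.commute_algebraMap_right c _⟩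
  have hcomm : Commute (a + algebraMap ℂ A c) (star (algebraMap ℂ A c)) := by
    rw [← algebraMap_star_comm]; exact Algebra.commute_algebraMap_right _ _
  simpa using hcomm.isStarNormal_sub

end StarAlgebra

theorem NonUnitalSubalgebra.tfae_antisymm {A : Type*} [CStarAlgebra A]
    (S : NonUnitalSubalgebra ℂ A) (hfin : ∀ a ∈ S, (spectrum ℂ a).Finite) :
    List.TFAE
      [ ∀ a ∈ S, star a ∈ S → ∃ c : ℂ, a = algebraMap ℂ A c,
        ∀ a ∈ S, IsSelfAdjoint a → ∃ c : ℂ, a = algebraMap ℂ A c,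
        ∀ e ∈ S, IsStarProjection e → e = 0 ∨ e = 1,
        ∀ u : A, (∃ a ∈ S, ∃ c : ℂ, u = a + algebraMap ℂ A c) → u ∈ unitary A →
          ∃ c : ℂ, u = algebraMap ℂ A c,
        ∀ a ∈ S, IsStarNormal a → ∃ c : ℂ, a = algebraMap ℂ A c ] := by
  tfae_have 1 → 2 := fun h a ha hsa ↦ h a ha (by rwa [hsa.star_eq])
  tfae_have 2 → 1 := fun h _ ↦ S.exists_eq_algebraMap_of_star_mem h
  tfae_have 2 → 3 := fun h e he hproj ↦ by
    obtain ⟨c, rfl⟩ := h e he hproj.isSelfAdjoint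
    exact eq_zero_or_eq_one_of_isIdempotentElem_algebraMap hproj.isIdempotentElem
  tfae_have 3 → 5 := fun h a ha _ ↦ S.exists_eq_algebraMap_of_isStarNormal h ha (hfin a ha)
  tfae_have 5 → 2 := fun h a ha hsa ↦ h a ha hsa.isStarNormal
  tfae_have 5 → 4 := by
    rintro h u ⟨a, ha, c, rfl⟩ hu
    obtain ⟨d, rfl⟩ := h a ha (isStarNormal_of_add_algebraMap_mem_unitary hu)
    exact ⟨d + c, (map_add _ _ _).symm⟩
  tfae_have 4 → 3 := fun h e he hproj ↦ by
    have hu := hproj.one_sub_two_mul_mem_unitary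
    obtain ⟨c, hc⟩ := h _ ⟨(-2 : ℂ) • e, SMulMemClass.smul_mem _ he, 1, by
      simp only [map_one, neg_smul, ofNat_smul_eq_nsmul, nsmul_eq_mul]; abel⟩ hu
    have : e = algebraMap ℂ A ((1 - c) / 2) := by
      rw [Algebra.algebraMap_eq_smul_one, two_mul, ← two_smul ℂ] at hc
      rw [Algebra.algebraMap_eq_smul_one]
      linear_combination (norm := module) (-(2⁻¹ : ℂ)) • hc
    rw [this] at hproj ⊢
    exact eq_zero_or_eq_one_of_isIdempotentElem_algebraMap hproj.isIdempotentElem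
  tfae_finish

def IsOpAlg.toNonUnitalSubalgebra {n : ℕ} {S : Set (Mat n)} (hS : IsOpAlg S) :
    NonUnitalSubalgebra ℂ (Mat n) where
  carrier := S
  zero_mem' := hS.1
  add_mem' ha hb := hS.2.1 _ ha _ hb
  smul_mem' := hS.2.2.1
  mul_mem' ha hb := hS.2.2.2 _ ha _ hb

@[simp]
theorem IsOpAlg.mem_toNonUnitalSubalgebra {n : ℕ} {S : Set (Mat n)} (hS : IsOpAlg S)
    {A : Mat n} :
    A ∈ hS.toNonUnitalSubalgebra ↔ A ∈ S :=
  Iff.rfl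

/-- For an operator algebra `𝒜 ⊆ Mₙ(ℂ)` the following are equivalent:
(i) `𝒜` is antisymmetric; (ii) every self-adjoint element of `𝒜` is a scalar multiple of `I`;
(iii) the only orthogonal projections in `𝒜` are `0` and possibly `I`; (iv) every unitary
element of `𝒜 + ℂ·I` is a scalar multiple of `I`; (v) every normal element of `𝒜` is a
scalar multiple of `I`. -/
theorem antisym_tfae_finiteDim (n : ℕ) (S : Set (Mat n)) (hS : IsOpAlg S) :
    List.TFAE
      [ Antisym S,
        ∀ A ∈ S, Aᴴ = A → ∃ c : ℂ, A = c • (1 : Mat n),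
        ∀ P ∈ S, P * P = P → Pᴴ = P → P = 0 ∨ P = 1,
        ∀ B : Mat n, (∃ A ∈ S, ∃ c : ℂ, B = A + c • (1 : Mat n)) →
          Bᴴ * B = 1 → B * Bᴴ = 1 → ∃ c : ℂ, B = c • (1 : Mat n),
        ∀ A ∈ S, A * Aᴴ = Aᴴ * A → ∃ c : ℂ, A = c • (1 : Mat n) ] := by
  let _ : CStarAlgebra (Mat n) := Matrix.instCStarAlgebra
  have h := hS.toNonUnitalSubalgebra.tfae_antisymm fun a _ ↦ Matrix.finite_spectrum a
  simpa only [Antisym, IsOpAlg.mem_toNonUnitalSubalgebra, Matrix.star_eq_conjTranspose,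
    Algebra.algebraMap_eq_smul_one, isSelfAdjoint_iff, isStarProjection_iff', Unitary.mem_iff,
    isStarNormal_iff, Commute.symm_iff, commute_iff_eq, and_imp] using h
end
end

section
/- Let v = (v₁,…,vₙ) be an anti-orthogonal basis of ℂⁿ and let 𝒟_v ⊆ Mₙ(ℂ) be the set of all matrices for which each vᵢ is an eigenvector. Then 𝒟_v is a maximal hereditarily antisymmetric operator algebra: 𝒟_v is hereditarily antisymmetric, and no operator algebra in Mₙ(ℂ) properly containing 𝒟_v is hereditarily antisymmetric. -/
open Matrix ContinuousLinearMap

noncomputable section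

abbrev Euc (n : ℕ) := EuclideanSpace ℂ (Fin n)

/-- The operator on Euclidean space corresponding to a matrix. -/
def opOf {n : ℕ} (A : Mat n) : Euc n →L[ℂ] Euc n := Matrix.toEuclideanCLM (𝕜 := ℂ) A

/-- Orthogonal projection onto `E` as an endomorphism of `ℂⁿ`. -/
def oproj {n : ℕ} (E : Submodule ℂ (Euc n)) : Euc n →L[ℂ] Euc n :=
  E.subtypeL ∘L E.orthogonalProjectionOnto

def InvariantSub {n : ℕ} (S : Set (Mat n)) (E : Submodule ℂ (Euc n)) : Prop :=
  ∀ A ∈ S, ∀ x ∈ E, opOf A x ∈ E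

def SemiInvariantSub {n : ℕ} (S : Set (Mat n)) (E : Submodule ℂ (Euc n)) : Prop :=
  ∃ E₁ E₂ : Submodule ℂ (Euc n), InvariantSub S E₁ ∧ InvariantSub S E₂ ∧ E₂ ≤ E₁ ∧ E = E₁ ⊓ E₂ᗮ

/-- The compression `PAP` of a matrix to a subspace. -/
def compr {n : ℕ} (E : Submodule ℂ (Euc n)) (A : Mat n) : Euc n →L[ℂ] Euc n :=
  oproj E ∘L opOf A ∘L oproj E

/-- Hereditary antisymmetry: the compression to every semi-invariant subspace is antisymmetric. -/
def HerAntisym {n : ℕ} (S : Set (Mat n)) : Prop :=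
  ∀ E : Submodule ℂ (Euc n), SemiInvariantSub S E →
    ∀ A ∈ S, ∀ B ∈ S, compr E A = ContinuousLinearMap.adjoint (compr E B) →
      ∃ c : ℂ, compr E A = c • oproj E

/-- `𝒟_v`: the matrices for which every `vᵢ` is an eigenvector. -/
def Dv {n : ℕ} (v : Module.Basis (Fin n) ℂ (Euc n)) : Set (Mat n) :=
  {A | ∀ i : Fin n, ∃ μ : ℂ, opOf A (v i) = μ • v i}

/-- `v` is anti-orthogonal: for all `i < j` and every subset `X` of the remaining indices,
`⟨Q vᵢ, vⱼ⟩ ≠ 0`, where `Q` is the orthogonal projection onto `(span{v_k : k ∈ X})ᗮ`. -/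
def AntiOrth {n : ℕ} (v : Module.Basis (Fin n) ℂ (Euc n)) : Prop :=
  ∀ i j : Fin n, i < j → ∀ X : Set (Fin n), i ∉ X → j ∉ X →
    (inner ℂ (oproj ((Submodule.span ℂ ((⇑v) '' X))ᗮ) (v i)) (v j) : ℂ) ≠ 0


/-!
Because `𝒟_v` contains the rank-one idempotents `v k ↦ v k`, the invariant subspaces of any
algebra `𝒜 ⊇ 𝒟_v` are spans of basis vectors, so a semi-invariant subspace has the form
`E = span {v k | k ∈ Y} ⊓ (span {v k | k ∈ X})ᗮ` with `X ⊆ Y` (`semiSpan v X Y`). It is spanned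
by the `w k = perpVec v X k`, `k ∈ Y \ X`, the components of the `v k` orthogonal to the `v i`,
`i ∈ X`, and every `u ∈ E` is `∑ k ∈ Y \ X, (v.repr u k) • w k`.

If `A, B ∈ 𝒟_v` have eigenvalues `μ k`, `ν k`, their compressions to `E` have eigenvectors `w k`,
so `PAP = (PBP)*` gives `conj (μ k) ⟪w k, w l⟫ = ν l ⟪w k, w l⟫`. Anti-orthogonality gives
`⟪w k, w l⟫ ≠ 0`, hence all `μ k`, `k ∈ Y \ X`, coincide and `PAP` is scalar.

If `𝒜 ⊋ 𝒟_v`, write `a ≤ b` when `𝒜` contains the matrix unit `v a ↦ v b` (equivalently,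
`Reaches v 𝒜 a b`). This is a preorder, and some `i ≠ j` satisfy `i ≤ j`. For `Y = {k | i ≤ k}`
and `X = {k ∈ Y | ¬ k ≤ j}`, both invariant, `Y \ X` is the interval `[i, j]`, and
`∑ k ∈ Y \ X, (⟪w j, w k⟫ / ‖w j‖²) (v k ↦ v j)` lies in `𝒜` and compresses to the orthogonal
projection onto `ℂ w j`. This compression is self-adjoint but not scalar, since `w i ∉ ℂ w j`.
-/

open Submodule
open scoped InnerProductSpace

variable {n : ℕ}

lemma oproj_eq_starProjection (K : Submodule ℂ (Euc n)) : oproj K = K.starProjection := rfl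

lemma compr_apply (E : Submodule ℂ (Euc n)) (A : Mat n) (x : Euc n) :
    compr E A x = E.starProjection (opOf A (E.starProjection x)) := rfl

lemma opOf_injective : Function.Injective (opOf (n := n)) :=
  (toEuclideanCLM (n := Fin n) (𝕜 := ℂ)).injective

lemma opOf_mul (A B : Mat n) : opOf (A * B) = opOf A ∘L opOf B :=
  map_mul (toEuclideanCLM (n := Fin n) (𝕜 := ℂ)) A B

lemma opOf_smul (c : ℂ) (A : Mat n) : opOf (c • A) = c • opOf A :=
  map_smul (toEuclideanCLM (n := Fin n) (𝕜 := ℂ)) c A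

lemma opOf_sum {ι : Type*} (s : Finset ι) (A : ι → Mat n) :
    opOf (∑ i ∈ s, A i) = ∑ i ∈ s, opOf (A i) :=
  map_sum (toEuclideanCLM (n := Fin n) (𝕜 := ℂ)) A s

section BasisUnit

variable (v : Module.Basis (Fin n) ℂ (Euc n))

def basisUnit (j k : Fin n) : Mat n :=
  (toEuclideanCLM (𝕜 := ℂ)).symm (LinearMap.toContinuousLinearMap ((v.coord k).smulRight (v j)))

@[simp]
lemma opOf_basisUnit_apply (j k : Fin n) (x : Euc n) :
    opOf (basisUnit v j k) x = v.repr x k • v j := by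
  simp [opOf, basisUnit]

lemma basisUnit_self_mem_Dv (k : Fin n) : basisUnit v k k ∈ Dv v :=
  fun i => ⟨v.repr (v i) k, by by_cases h : i = k <;> simp [h]⟩

end BasisUnit

section Reaches

variable (v : Module.Basis (Fin n) ℂ (Euc n)) (S : Set (Mat n))

def Reaches (a b : Fin n) : Prop := ∃ A ∈ S, v.repr (opOf A (v a)) b ≠ 0

variable {v S}

lemma mem_Dv_iff {A : Mat n} : A ∈ Dv v ↔ ∀ a b, v.repr (opOf A (v a)) b ≠ 0 → b = a := by
  refine ⟨fun hA a b hab => ?_, fun hA a => ⟨v.repr (opOf A (v a)) a, ?_⟩⟩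
  · obtain ⟨μ, hμ⟩ := hA a
    by_contra hba
    simp [hμ, Ne.symm hba] at hab
  · rw [v.ext_elem_iff]
    intro b
    by_cases hba : b = a
    · simp [hba]
    · simp [Ne.symm hba, not_ne_iff.1 (mt (hA a b) hba)]

lemma Reaches.eq_of_Dv {a b : Fin n} (h : Reaches v (Dv v) a b) : b = a := by
  obtain ⟨A, hA, hab⟩ := h
  exact mem_Dv_iff.1 hA a b hab

lemma exists_reaches_ne {T : Mat n} (hT : T ∈ S) (hTD : T ∉ Dv v) :
    ∃ a b, a ≠ b ∧ Reaches v S a b := by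
  simp only [mem_Dv_iff, not_forall] at hTD
  obtain ⟨a, b, hab, hba⟩ := hTD
  exact ⟨a, b, Ne.symm hba, T, hT, hab⟩

lemma invariantSub_span_of_reaches {Z : Set (Fin n)} (hZ : ∀ a ∈ Z, ∀ b, Reaches v S a b → b ∈ Z) :
    InvariantSub S (span ℂ (v '' Z)) := by
  intro A hA x hx
  have hle : span ℂ (v '' Z) ≤ (span ℂ (v '' Z)).comap (opOf A).toLinearMap := by
    rw [span_le]
    rintro _ ⟨a, ha, rfl⟩
    exact v.mem_span_image.2 fun b hb => hZ a ha b ⟨A, hA, Finsupp.mem_support_iff.1 hb⟩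
  exact hle hx

lemma invariantSub_Dv_span (Z : Set (Fin n)) : InvariantSub (Dv v) (span ℂ (v '' Z)) :=
  invariantSub_span_of_reaches fun _ ha _ hab => hab.eq_of_Dv ▸ ha

end Reaches

section SemiSpan

variable (v : Module.Basis (Fin n) ℂ (Euc n)) (X Y : Finset (Fin n))

def perpVec (k : Fin n) : Euc n := (span ℂ (v '' X))ᗮ.starProjection (v k)

def semiSpan : Submodule ℂ (Euc n) := span ℂ (v '' Y) ⊓ (span ℂ (v '' X))ᗮ

lemma perpVec_mem_orthogonal (k : Fin n) : perpVec v X k ∈ (span ℂ (v '' X))ᗮ :=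
  starProjection_apply_mem _ _

lemma sub_perpVec_mem_span (k : Fin n) : v k - perpVec v X k ∈ span ℂ (v '' X) := by
  simp [perpVec, starProjection_apply_mem]

variable {v X Y}

lemma perpVec_eq_zero {k : Fin n} (hk : k ∈ X) : perpVec v X k = 0 := by
  have hvk : v k ∈ span ℂ (v '' X) := subset_span ⟨k, hk, rfl⟩
  rw [perpVec, starProjection_orthogonal_val, starProjection_eq_self_iff.2 hvk, sub_self]

lemma repr_perpVec {m : Fin n} (hm : m ∉ X) (k : Fin n) :
    v.repr (perpVec v X k) m = v.repr (v k) m := by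
  rw [eq_comm, ← sub_eq_zero, ← Finsupp.sub_apply, ← map_sub]
  exact Finsupp.notMem_support_iff.1
    fun h => hm (v.repr_support_subset_of_mem_span _ (sub_perpVec_mem_span v X k) h)

lemma perpVec_ne_zero {k : Fin n} (hk : k ∉ X) : perpVec v X k ≠ 0 := by
  intro h
  simpa [h] using repr_perpVec (v := v) hk k

lemma perpVec_mem_semiSpan (hXY : X ⊆ Y) {k : Fin n} (hk : k ∈ Y) :
    perpVec v X k ∈ semiSpan v X Y := by
  refine ⟨?_, perpVec_mem_orthogonal v X k⟩
  have hvk : v k ∈ span ℂ (v '' Y) := subset_span ⟨k, hk, rfl⟩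
  have hX : v k - perpVec v X k ∈ span ℂ (v '' Y) :=
    span_mono (Set.image_mono hXY) (sub_perpVec_mem_span v X k)
  simpa using sub_mem hvk hX

lemma span_le_orthogonal_semiSpan : span ℂ (v '' X) ≤ (semiSpan v X Y)ᗮ :=
  fun _ hx => (mem_orthogonal _ _).2 fun _ hu => inner_left_of_mem_orthogonal hx hu.2

lemma starProjection_semiSpan_basis (hXY : X ⊆ Y) {k : Fin n} (hk : k ∈ Y) :
    (semiSpan v X Y).starProjection (v k) = perpVec v X k :=
  eq_starProjection_of_mem_orthogonal' (perpVec_mem_semiSpan hXY hk)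
    (span_le_orthogonal_semiSpan (sub_perpVec_mem_span v X k)) (add_sub_cancel _ _).symm

lemma sum_repr_smul_perpVec {u : Euc n} (hu : u ∈ semiSpan v X Y) :
    ∑ m ∈ Y \ X, v.repr u m • perpVec v X m = u := by
  calc ∑ m ∈ Y \ X, v.repr u m • perpVec v X m = ∑ m, v.repr u m • perpVec v X m := by
        refine Finset.sum_subset (Finset.subset_univ _) fun m _ hm => ?_
        by_cases hmX : m ∈ X
        · simp [perpVec_eq_zero hmX]
        · have hmY : m ∉ Y := fun hmY => hm (Finset.mem_sdiff.2 ⟨hmY, hmX⟩)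
          simp [Finsupp.notMem_support_iff.1
            fun h => hmY (v.repr_support_subset_of_mem_span _ hu.1 h)]
    _ = (span ℂ (v '' X))ᗮ.starProjection u := by
        simp only [perpVec, ← map_smul, ← map_sum, v.sum_repr]
    _ = u := starProjection_eq_self_iff.2 hu.2

end SemiSpan

section Dv

variable {v : Module.Basis (Fin n) ℂ (Euc n)} {X Y : Finset (Fin n)}

lemma compr_perpVec_of_mem_Dv (hXY : X ⊆ Y) {A : Mat n} (hA : A ∈ Dv v) {k : Fin n}
    (hk : k ∈ Y) {μ : ℂ} (hμ : opOf A (v k) = μ • v k) :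
    compr (semiSpan v X Y) A (perpVec v X k) = μ • perpVec v X k := by
  have hAX : opOf A (v k - perpVec v X k) ∈ span ℂ (v '' X) :=
    invariantSub_Dv_span _ A hA _ (sub_perpVec_mem_span v X k)
  have hw : perpVec v X k = v k - (v k - perpVec v X k) := (sub_sub_cancel _ _).symm
  rw [compr_apply, starProjection_eq_self_iff.2 (perpVec_mem_semiSpan hXY hk)]
  conv_lhs => rw [hw]
  rw [map_sub, map_sub, hμ, map_smul, starProjection_semiSpan_basis hXY hk,
    (starProjection_apply_eq_zero_iff _).2 (span_le_orthogonal_semiSpan hAX), sub_zero]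

lemma inner_perpVec_ne_zero (hv : AntiOrth v) {k l : Fin n} (hk : k ∉ X) (hl : l ∉ X) :
    ⟪perpVec v X k, perpVec v X l⟫_ℂ ≠ 0 := by
  have hinner : ∀ a b, ⟪perpVec v X a, perpVec v X b⟫_ℂ = ⟪perpVec v X a, v b⟫_ℂ := fun a b =>
    calc ⟪perpVec v X a, perpVec v X b⟫_ℂ
        = ⟪(span ℂ (v '' X))ᗮ.starProjection (perpVec v X a), v b⟫_ℂ :=
          (inner_starProjection_left_eq_right _ _ _).symm
      _ = ⟪perpVec v X a, v b⟫_ℂ := by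
          rw [starProjection_eq_self_iff.2 (perpVec_mem_orthogonal v X a)]
  rcases lt_trichotomy k l with h | rfl | h
  · rw [hinner]
    exact hv k l h X hk hl
  · exact inner_self_ne_zero.2 (perpVec_ne_zero hk)
  · rw [← inner_conj_symm, hinner, map_ne_zero]
    exact hv l k h X hl hk

lemma compr_eq_smul_of_perpVec {A : Mat n} {c : ℂ}
    (h : ∀ m ∈ Y \ X, compr (semiSpan v X Y) A (perpVec v X m) = c • perpVec v X m) :
    compr (semiSpan v X Y) A = c • oproj (semiSpan v X Y) := by
  ext1 x
  set E := semiSpan v X Y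
  have hu := starProjection_apply_mem E x
  calc compr E A x = compr E A (∑ m ∈ Y \ X, v.repr (E.starProjection x) m • perpVec v X m) := by
        rw [sum_repr_smul_perpVec hu, compr_apply, compr_apply, starProjection_eq_self_iff.2 hu]
    _ = c • ∑ m ∈ Y \ X, v.repr (E.starProjection x) m • perpVec v X m := by
        simp only [map_sum, map_smul, Finset.smul_sum]
        exact Finset.sum_congr rfl fun m hm => by rw [h m hm, smul_comm]
    _ = (c • oproj E) x := by
        rw [sum_repr_smul_perpVec hu]
        rfl

lemma exists_compr_eq_smul_of_mem_Dv (hv : AntiOrth v) (hXY : X ⊆ Y) {A B : Mat n}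
    (hA : A ∈ Dv v) (hB : B ∈ Dv v)
    (hAB : compr (semiSpan v X Y) A = adjoint (compr (semiSpan v X Y) B)) :
    ∃ c : ℂ, compr (semiSpan v X Y) A = c • oproj (semiSpan v X Y) := by
  choose μ hμ using hA
  choose ν hν using hB
  have hAw : ∀ k ∈ Y \ X, compr (semiSpan v X Y) A (perpVec v X k) = μ k • perpVec v X k :=
    fun k hk => compr_perpVec_of_mem_Dv hXY (fun i => ⟨_, hμ i⟩) (Finset.mem_sdiff.1 hk).1 (hμ k)
  have hBw : ∀ k ∈ Y \ X, compr (semiSpan v X Y) B (perpVec v X k) = ν k • perpVec v X k :=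
    fun k hk => compr_perpVec_of_mem_Dv hXY (fun i => ⟨_, hν i⟩) (Finset.mem_sdiff.1 hk).1 (hν k)
  have hconj : ∀ k ∈ Y \ X, ∀ l ∈ Y \ X, star (μ k) = ν l := by
    intro k hk l hl
    have h := congrArg (fun T => ⟪T (perpVec v X k), perpVec v X l⟫_ℂ) hAB
    simp only [adjoint_inner_left, hAw k hk, hBw l hl, inner_smul_left, inner_smul_right] at h
    exact mul_right_cancel₀
      (inner_perpVec_ne_zero hv (Finset.mem_sdiff.1 hk).2 (Finset.mem_sdiff.1 hl).2) h
  rcases (Y \ X).eq_empty_or_nonempty with hYX | ⟨k₀, hk₀⟩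
  · exact ⟨0, compr_eq_smul_of_perpVec fun m hm => by simp [hYX] at hm⟩
  · refine ⟨μ k₀, compr_eq_smul_of_perpVec fun m hm => ?_⟩
    rw [hAw m hm, star_injective ((hconj m hm k₀ hk₀).trans (hconj k₀ hk₀ k₀ hk₀).symm)]

lemma exists_eq_span_of_invariantSub_Dv {F : Submodule ℂ (Euc n)}
    (hF : InvariantSub (Dv v) F) : ∃ Z : Finset (Fin n), F = span ℂ (v '' Z) := by
  classical
  refine ⟨Finset.univ.filter (v · ∈ F), le_antisymm (fun x hx => ?_) ?_⟩
  · refine v.mem_span_image.2 fun k hk => ?_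
    have hkx : v.repr x k • v k ∈ F := by simpa using hF _ (basisUnit_self_mem_Dv v k) x hx
    simpa using (F.smul_mem_iff (Finsupp.mem_support_iff.1 hk)).1 hkx
  · rw [span_le]
    rintro _ ⟨k, hk, rfl⟩
    simpa using hk

theorem herAntisym_Dv (hv : AntiOrth v) : HerAntisym (Dv v) := by
  rintro _ ⟨E₁, E₂, hE₁, hE₂, hle, rfl⟩ A hA B hB hAB
  obtain ⟨Y, rfl⟩ := exists_eq_span_of_invariantSub_Dv hE₁
  obtain ⟨X, rfl⟩ := exists_eq_span_of_invariantSub_Dv hE₂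
  have hXY : X ⊆ Y := fun k hk => by
    simpa using hle (subset_span ⟨k, hk, rfl⟩ : v k ∈ span ℂ (v '' X))
  exact exists_compr_eq_smul_of_mem_Dv hv hXY hA hB hAB

end Dv

section Maximal

variable {v : Module.Basis (Fin n) ℂ (Euc n)} {S : Set (Mat n)} {X Y : Finset (Fin n)}

def IsOpAlg.toSubmodule (hS : IsOpAlg S) : Submodule ℂ (Mat n) where
  carrier := S
  zero_mem' := hS.1
  add_mem' {A B} hA hB := hS.2.1 A hA B hB
  smul_mem' := hS.2.2.1

lemma Reaches.refl (hDS : Dv v ⊆ S) (a : Fin n) : Reaches v S a a :=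
  ⟨basisUnit v a a, hDS (basisUnit_self_mem_Dv v a), by simp⟩

lemma basisUnit_mem_of_reaches (hS : IsOpAlg S) (hDS : Dv v ⊆ S) {a b : Fin n}
    (h : Reaches v S a b) : basisUnit v b a ∈ S := by
  obtain ⟨A, hA, hab⟩ := h
  have hmem : basisUnit v b b * A * basisUnit v a a ∈ S :=
    hS.2.2.2 _ (hS.2.2.2 _ (hDS (basisUnit_self_mem_Dv v b)) _ hA) _
      (hDS (basisUnit_self_mem_Dv v a))
  have heq : basisUnit v b b * A * basisUnit v a a =
      v.repr (opOf A (v a)) b • basisUnit v b a := by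
    apply opOf_injective
    ext1 x
    simp [opOf_mul, opOf_smul, smul_smul, mul_comm]
  simpa [heq, smul_smul, inv_mul_cancel₀ hab] using hS.2.2.1 (v.repr (opOf A (v a)) b)⁻¹ _ hmem

lemma Reaches.trans (hS : IsOpAlg S) (hDS : Dv v ⊆ S) {a b c : Fin n} (hab : Reaches v S a b)
    (hbc : Reaches v S b c) : Reaches v S a c :=
  ⟨basisUnit v c b * basisUnit v b a, hS.2.2.2 _ (basisUnit_mem_of_reaches hS hDS hbc) _
    (basisUnit_mem_of_reaches hS hDS hab), by simp [opOf_mul]⟩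

lemma compr_sum_basisUnit (hXY : X ⊆ Y) {j : Fin n} (hj : j ∈ Y) :
    compr (semiSpan v X Y) (∑ k ∈ Y \ X,
        (⟪perpVec v X j, perpVec v X k⟫_ℂ / ((‖perpVec v X j‖ ^ 2 : ℝ) : ℂ)) • basisUnit v j k) =
      (ℂ ∙ perpVec v X j).starProjection := by
  ext1 x
  have hu := starProjection_apply_mem (semiSpan v X Y) x
  have hinner : ⟪perpVec v X j, (semiSpan v X Y).starProjection x⟫_ℂ = ∑ k ∈ Y \ X,
      ⟪perpVec v X j, perpVec v X k⟫_ℂ * v.repr ((semiSpan v X Y).starProjection x) k := by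
    conv_lhs => rw [← sum_repr_smul_perpVec hu]
    simp [mul_comm]
  have hwx : ⟪perpVec v X j, (semiSpan v X Y).starProjection x⟫_ℂ = ⟪perpVec v X j, x⟫_ℂ := by
    rw [← inner_starProjection_left_eq_right,
      starProjection_eq_self_iff.2 (perpVec_mem_semiSpan hXY hj)]
  rw [starProjection_singleton, ← hwx, hinner, compr_apply, opOf_sum]
  simp only [_root_.sum_apply, map_sum, Finset.sum_div, Finset.sum_smul]
  refine Finset.sum_congr rfl fun k _ => ?_
  rw [opOf_smul, _root_.smul_apply, opOf_basisUnit_apply, map_smul, map_smul,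
    starProjection_semiSpan_basis hXY hj, smul_smul, div_mul_eq_mul_div]
  rfl

lemma starProjection_span_perpVec_ne_smul (hXY : X ⊆ Y) {i j : Fin n} (hi : i ∈ Y \ X)
    (hj : j ∈ Y \ X) (hij : i ≠ j) (c : ℂ) :
    (ℂ ∙ perpVec v X j).starProjection ≠ c • oproj (semiSpan v X Y) := by
  intro h
  obtain ⟨hiY, hiX⟩ := Finset.mem_sdiff.1 hi
  obtain ⟨hjY, hjX⟩ := Finset.mem_sdiff.1 hj
  have hc : c = 1 := by
    have hw := congrArg (· (perpVec v X j)) h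
    simp only [starProjection_eq_self_iff.2 (mem_span_singleton_self _), _root_.smul_apply,
      oproj_eq_starProjection, starProjection_eq_self_iff.2 (perpVec_mem_semiSpan hXY hjY)] at hw
    exact smul_left_injective ℂ (perpVec_ne_zero hjX) ((one_smul _ _).trans hw).symm
  subst hc
  have hwi : perpVec v X i ∈ ℂ ∙ perpVec v X j := by
    rw [← starProjection_eq_self_iff, h, one_smul, oproj_eq_starProjection,
      starProjection_eq_self_iff]
    exact perpVec_mem_semiSpan hXY hiY
  obtain ⟨a, ha⟩ := mem_span_singleton.1 hwi
  simpa [repr_perpVec hiX, hij] using congrArg (v.repr · i) ha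

theorem not_herAntisym_of_reaches (hS : IsOpAlg S) (hDS : Dv v ⊆ S) {i j : Fin n} (hij : i ≠ j)
    (h : Reaches v S i j) : ¬ HerAntisym S := by
  classical
  intro hHer
  set Y := Finset.univ.filter (Reaches v S i ·)
  set X := Finset.univ.filter fun k => Reaches v S i k ∧ ¬ Reaches v S k j
  have hXY : X ⊆ Y := Finset.monotone_filter_right _ fun _ _ hk => hk.1
  have hYX : ∀ k, k ∈ Y \ X ↔ Reaches v S i k ∧ Reaches v S k j := by
    intro k
    simp only [X, Y, Finset.mem_sdiff, Finset.mem_filter, Finset.mem_univ, true_and]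
    tauto
  have hsemi : SemiInvariantSub S (semiSpan v X Y) := by
    refine ⟨_, _, invariantSub_span_of_reaches ?_, invariantSub_span_of_reaches ?_,
      span_mono (Set.image_mono (Finset.coe_subset.2 hXY)), rfl⟩
    · simp only [Y, Finset.coe_filter, Finset.mem_univ, true_and, Set.mem_ofPred_eq]
      exact fun a ha b hab => ha.trans hS hDS hab
    · simp only [X, Finset.coe_filter, Finset.mem_univ, true_and, Set.mem_ofPred_eq]
      exact fun a ha b hab => ⟨ha.1.trans hS hDS hab, fun hbj => ha.2 (hab.trans hS hDS hbj)⟩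
  have hi : i ∈ Y \ X := (hYX i).2 ⟨Reaches.refl hDS i, h⟩
  have hj : j ∈ Y \ X := (hYX j).2 ⟨h, Reaches.refl hDS j⟩
  set A := ∑ k ∈ Y \ X,
    (⟪perpVec v X j, perpVec v X k⟫_ℂ / ((‖perpVec v X j‖ ^ 2 : ℝ) : ℂ)) • basisUnit v j k
  have hA : A ∈ S := hS.toSubmodule.sum_mem fun k hk =>
    hS.toSubmodule.smul_mem _ (basisUnit_mem_of_reaches hS hDS ((hYX k).1 hk).2)
  have hcompr : compr (semiSpan v X Y) A = (ℂ ∙ perpVec v X j).starProjection :=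
    compr_sum_basisUnit hXY (Finset.mem_sdiff.1 hj).1
  have hsa : compr (semiSpan v X Y) A = adjoint (compr (semiSpan v X Y) A) := by
    rw [hcompr]
    exact (isSelfAdjoint_starProjection _).adjoint_eq.symm
  obtain ⟨c, hc⟩ := hHer _ hsemi A hA A hA hsa
  exact starProjection_span_perpVec_ne_smul hXY hi hj hij c (hcompr.symm.trans hc)

end Maximal

/-- If `v` is an anti-orthogonal basis of `ℂⁿ`, then `𝒟_v` is a maximal hereditarily
antisymmetric operator algebra: it is hereditarily antisymmetric, and no operator algebra
properly containing it is hereditarily antisymmetric. -/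
theorem Dv_maximal_herAntisym (n : ℕ) (v : Module.Basis (Fin n) ℂ (Euc n)) (hv : AntiOrth v) :
    HerAntisym (Dv v) ∧
      ∀ S : Set (Mat n), IsOpAlg S → Dv v ⊆ S → Dv v ≠ S → ¬ HerAntisym S := by
  refine ⟨herAntisym_Dv hv, fun S hS hDS hne => ?_⟩
  obtain ⟨T, hT, hTD⟩ := Set.exists_of_ssubset (hDS.ssubset_of_ne hne)
  obtain ⟨i, j, hij, h⟩ := exists_reaches_ne hT hTD
  exact not_herAntisym_of_reaches hS hDS hij h
end
end
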